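/- arXiv:2407.21261 — 5 statements merged into one kernel-verified Lean document; each statement's English description precedes it below -/
import Mathlib

section
/- Let x, y ∈ l_p (1 < p < ∞) with ⟨J(x), y⟩ ≠ 0. Then 0 ∉ D̂*J(x)(y); equivalently, limsup_{z→x} (−⟨J(z) − J(x), y⟩)/(‖z − x‖_p + ‖J(z) − J(x)‖_q) > 0. In fact this limsup is at least |⟨J(x), y⟩|/(2‖x‖_p). -/
/-!
`J` is positively homogeneous, so along the ray `t ↦ t • x` the increments `z - x` and
`J z - J x` are `(t - 1) • x` and `(t - 1) • J x`. Since `‖J x‖ = ‖x‖`, the quotient there is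
`-(t - 1) ⟨J x, y⟩ / (|t - 1| · 2‖x‖)`, which equals `|⟨J x, y⟩| / (2‖x‖)` on the side of `t = 1`
where `t - 1` has the sign opposite to `⟨J x, y⟩`. By Hölder's inequality the quotient is bounded
above by `‖y‖`, so its limsup is not a junk value and dominates this constant.
-/

open scoped ENNReal Topology
open Filter

section Ray

variable {E F : Type*} [NormedAddCommGroup E] [NormedSpace ℝ E]
  [NormedAddCommGroup F] [NormedSpace ℝ F]

lemma ne_zero_of_smul_eq_of_apply_ne_zero {J : E → F} {L : F →L[ℝ] ℝ} {x : E}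
    (hJ : ∀ t : ℝ, 0 < t → J (t • x) = t • J x) (hx : L (J x) ≠ 0) : x ≠ 0 := by
  rintro rfl
  have hJ0 : J 0 = 0 := by simpa [two_smul] using hJ 2 two_pos
  simp [hJ0] at hx

lemma neg_apply_sub_div_one_sub_smul {J : E → F} {L : F →L[ℝ] ℝ} {x : E}
    (hJ : ∀ t : ℝ, 0 < t → J (t • x) = t • J x) (hx : L (J x) ≠ 0) {s : ℝ} (hs : 0 < s)
    (hs' : 0 < 1 - s * L (J x)) :
    -L (J ((1 - s * L (J x)) • x) - J x) /
        (‖(1 - s * L (J x)) • x - x‖ + ‖J ((1 - s * L (J x)) • x) - J x‖) =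
      |L (J x)| / (‖x‖ + ‖J x‖) := by
  rw [hJ _ hs']
  simp only [sub_smul, one_smul, sub_sub_cancel_left, norm_neg, norm_smul, ← mul_add, map_neg,
    map_smul, Real.norm_eq_abs, abs_mul, abs_of_pos hs, smul_eq_mul, neg_neg]
  rw [mul_assoc, mul_assoc, mul_div_mul_left _ _ hs.ne', ← abs_mul_abs_self (L (J x)),
    mul_div_mul_left _ _ (abs_ne_zero.2 hx)]

lemma le_limsup_neg_apply_sub_div_of_smul_eq (J : E → F) (L : F →L[ℝ] ℝ) {x : E}
    (hJ : ∀ t : ℝ, 0 < t → J (t • x) = t • J x) (hx : L (J x) ≠ 0) :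
    |L (J x)| / (‖x‖ + ‖J x‖) ≤
      limsup (fun z => -L (J z - J x) / (‖z - x‖ + ‖J z - J x‖)) (𝓝[≠] x) := by
  set c := L (J x)
  have hx0 : x ≠ 0 := ne_zero_of_smul_eq_of_apply_ne_zero hJ hx
  have hbdd : IsBoundedUnder (· ≤ ·) (𝓝[≠] x)
      (fun z => -L (J z - J x) / (‖z - x‖ + ‖J z - J x‖)) := by
    refine isBoundedUnder_of ⟨‖L‖, fun z => div_le_of_le_mul₀ (by positivity) (norm_nonneg _) ?_⟩
    calc -L (J z - J x) ≤ ‖L‖ * ‖J z - J x‖ := (neg_le_abs _).trans (L.le_opNorm _)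
      _ ≤ ‖L‖ * (‖z - x‖ + ‖J z - J x‖) := by gcongr; exact le_add_of_nonneg_left (norm_nonneg _)
  have hcurve : Tendsto (fun s : ℝ => (1 - s * c) • x) (𝓝[>] 0) (𝓝[≠] x) := by
    refine tendsto_nhdsWithin_iff.2 ⟨?_, ?_⟩
    · exact (Continuous.tendsto' (by fun_prop) 0 x (by simp)).mono_left nhdsWithin_le_nhds
    · filter_upwards [self_mem_nhdsWithin] with s (hs : 0 < s) h
      have : (s * c) • x = 0 := by simpa [sub_smul, sub_eq_self] using h
      exact smul_ne_zero (mul_ne_zero hs.ne' hx) hx0 this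
  have hpos : ∀ᶠ s in 𝓝[>] (0 : ℝ), 0 < 1 - s * c :=
    ((Continuous.tendsto' (by fun_prop) 0 1 (by simp)).eventually (lt_mem_nhds one_pos)).filter_mono
      nhdsWithin_le_nhds
  have hval : ∀ᶠ s in 𝓝[>] (0 : ℝ), |c| / (‖x‖ + ‖J x‖) ≤
      -L (J ((1 - s * c) • x) - J x) / (‖(1 - s * c) • x - x‖ + ‖J ((1 - s * c) • x) - J x‖) := by
    filter_upwards [hpos, self_mem_nhdsWithin] with s hs' (hs : 0 < s)
    exact (neg_apply_sub_div_one_sub_smul hJ hx hs hs').ge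
  exact le_limsup_of_frequently_le (hcurve.frequently hval.frequently) hbdd

end Ray

lemma lp.exists_continuousLinearMap_eq_tsum_mul {ι : Type*} {p q : ℝ≥0∞} [Fact (1 ≤ p)]
    [Fact (1 ≤ q)] [p.HolderConjugate q] (y : lp (fun _ : ι => ℝ) q) :
    ∃ L : lp (fun _ : ι => ℝ) p →L[ℝ] ℝ, ∀ w, L w = ∑' i, w i * y i :=
  ⟨(lp.dualPairing p q (fun _ => ContinuousLinearMap.mul ℝ ℝ) (K := 1) (fun _ => by simp)).flip y,
    fun _ => rfl⟩

lemma smul_eq_of_apply_eq_duality {ι : Type*} {p : ℝ} {P Q : ℝ≥0∞} [Fact (1 ≤ P)] [Fact (1 ≤ Q)]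
    {J : lp (fun _ : ι => ℝ) P → lp (fun _ : ι => ℝ) Q}
    (hJ : ∀ z i, J z i = |z i| ^ (p - 2) * z i / ‖z‖ ^ (p - 2)) (x : lp (fun _ : ι => ℝ) P)
    {t : ℝ} (ht : 0 < t) : J (t • x) = t • J x := by
  ext i
  rw [lp.coeFn_smul, Pi.smul_apply, hJ, hJ, lp.coeFn_smul, Pi.smul_apply, smul_eq_mul, smul_eq_mul,
    norm_smul, Real.norm_eq_abs, abs_mul, abs_of_pos ht, Real.mul_rpow ht.le (abs_nonneg _),
    Real.mul_rpow ht.le (norm_nonneg _), mul_assoc, mul_div_mul_left _ _ (by positivity)]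
  ring

lemma abs_rpow_sub_two_mul_div_rpow {p q : ℝ} (hpq : p.HolderConjugate q) (a : ℝ) {r : ℝ}
    (hr : 0 ≤ r) : |(|a| ^ (p - 2) * a / r ^ (p - 2))| ^ q = |a| ^ p / r ^ ((p - 2) * q) := by
  rcases eq_or_ne a 0 with rfl | ha
  · simp [Real.zero_rpow hpq.ne_zero, Real.zero_rpow hpq.symm.ne_zero]
  have ha' : 0 < |a| := abs_pos.2 ha
  rw [abs_div, abs_mul, abs_of_nonneg (Real.rpow_nonneg (abs_nonneg a) _),
    abs_of_nonneg (Real.rpow_nonneg hr _), ← Real.rpow_add_one ha'.ne',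
    Real.div_rpow (by positivity) (Real.rpow_nonneg hr _), ← Real.rpow_mul ha'.le,
    ← Real.rpow_mul hr, show (p - 2 + 1) * q = p by linear_combination hpq.sub_one_mul_conj]

lemma lp.norm_eq_of_apply_eq_duality {ι : Type*} {p q : ℝ} (hpq : p.HolderConjugate q)
    [Fact (1 ≤ ENNReal.ofReal p)] [Fact (1 ≤ ENNReal.ofReal q)]
    (x : lp (fun _ : ι => ℝ) (ENNReal.ofReal p)) (w : lp (fun _ : ι => ℝ) (ENNReal.ofReal q))
    (hw : ∀ i, w i = |x i| ^ (p - 2) * x i / ‖x‖ ^ (p - 2)) : ‖w‖ = ‖x‖ := by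
  rcases eq_or_ne x 0 with rfl | hx
  · have : w = 0 := by ext i; simp [hw]
    simp [this]
  have hp : (ENNReal.ofReal p).toReal = p := ENNReal.toReal_ofReal hpq.nonneg
  have hq : (ENNReal.ofReal q).toReal = q := ENNReal.toReal_ofReal hpq.symm.nonneg
  have hsum : HasSum (fun i => ‖w i‖ ^ q) (‖x‖ ^ q) := by
    have h := (lp.hasSum_norm (by rw [hp]; exact hpq.pos) x).div_const (‖x‖ ^ ((p - 2) * q))
    rw [hp, ← Real.rpow_sub (norm_pos_iff.2 hx),
      show p - (p - 2) * q = q by linear_combination -hpq.mul_eq_add] at h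
    simpa only [hw, Real.norm_eq_abs, abs_rpow_sub_two_mul_div_rpow hpq _ (norm_nonneg x)] using h
  have hw' := lp.norm_rpow_eq_tsum (by rw [hq]; exact hpq.symm.pos) w
  rw [hq, hsum.tsum_eq] at hw'
  exact (Real.rpow_left_inj (norm_nonneg _) (norm_nonneg _) hpq.symm.ne_zero).1 hw'

theorem zero_not_mem_coderivative_duality_map_lp_general (p q : ℝ) (hp : 1 < p)
    (hpq : 1 / p + 1 / q = 1)
    [Fact (1 ≤ ENNReal.ofReal p)] [Fact (1 ≤ ENNReal.ofReal q)]
    (J : lp (fun _ : ℕ => ℝ) (ENNReal.ofReal p) → lp (fun _ : ℕ => ℝ) (ENNReal.ofReal q))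
    (hJ : ∀ z, ∀ n : ℕ, J z n = |z n| ^ (p - 2) * z n / ‖z‖ ^ (p - 2))
    (x y : lp (fun _ : ℕ => ℝ) (ENNReal.ofReal p))
    (hxy : (∑' n : ℕ, J x n * y n) ≠ 0) :
    |∑' n : ℕ, J x n * y n| / (2 * ‖x‖) ≤
      Filter.limsup
        (fun z => (-(∑' n : ℕ, (J z n - J x n) * y n)) /
          (‖z - x‖ + ‖J z - J x‖)) (𝓝[≠] x) ∧
    (0 : lp (fun _ : ℕ => ℝ) (ENNReal.ofReal q)) ∉
      {w : lp (fun _ : ℕ => ℝ) (ENNReal.ofReal q) |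
        Filter.limsup
          (fun z => ((∑' n : ℕ, w n * (z n - x n)) - ∑' n : ℕ, (J z n - J x n) * y n) /
            (‖z - x‖ + ‖J z - J x‖)) (𝓝[≠] x) ≤ 0} := by
  have hconj : p.HolderConjugate q :=
    Real.holderConjugate_iff.2 ⟨hp, by simpa only [one_div] using hpq⟩
  have := hconj.symm.ennrealOfReal
  obtain ⟨L, hL⟩ := lp.exists_continuousLinearMap_eq_tsum_mul (p := ENNReal.ofReal q) y
  have hhom : ∀ t : ℝ, 0 < t → J (t • x) = t • J x :=
    fun _ ht => smul_eq_of_apply_eq_duality hJ x ht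
  have hLx : L (J x) ≠ 0 := by rwa [hL]
  have hx0 : x ≠ 0 := ne_zero_of_smul_eq_of_apply_ne_zero hhom hLx
  have hlow := le_limsup_neg_apply_sub_div_of_smul_eq J L hhom hLx
  rw [lp.norm_eq_of_apply_eq_duality hconj x (J x) (hJ x), ← two_mul] at hlow
  simp only [hL, lp.coeFn_sub, Pi.sub_apply] at hlow
  have hpos : 0 < |∑' n : ℕ, J x n * y n| / (2 * ‖x‖) := by
    have := norm_pos_iff.2 hx0
    positivity
  refine ⟨hlow, fun hmem => ?_⟩
  simp only [Set.mem_ofPred_eq, lp.coeFn_zero, Pi.zero_apply, zero_mul, tsum_zero, zero_sub] at hmem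
  exact (hpos.trans_le hlow).not_ge hmem

/-- for `x, y ∈ ℓᵖ` (`1 < p < ∞`) with `⟨J x, y⟩ ≠ 0`, where `J : ℓᵖ → ℓ^q`
is the normalized duality mapping, the limsup as `z → x` of
`(-⟨J z - J x, y⟩)/(‖z-x‖ + ‖J z - J x‖)` is at least `|⟨J x, y⟩|/(2‖x‖) > 0`;
consequently `0 ∉ D̂*J(x)(y)`. -/
theorem zero_not_mem_coderivative_duality_map_lp (p q : ℝ) (hp : 1 < p) (hq : 1 < q)
    (hpq : 1 / p + 1 / q = 1)
    [Fact (1 ≤ ENNReal.ofReal p)] [Fact (1 ≤ ENNReal.ofReal q)]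
    (J : lp (fun _ : ℕ => ℝ) (ENNReal.ofReal p) → lp (fun _ : ℕ => ℝ) (ENNReal.ofReal q))
    (hJ : ∀ z, ∀ n : ℕ, J z n = |z n| ^ (p - 2) * z n / ‖z‖ ^ (p - 2))
    (x y : lp (fun _ : ℕ => ℝ) (ENNReal.ofReal p))
    (hxy : (∑' n : ℕ, J x n * y n) ≠ 0) :
    |∑' n : ℕ, J x n * y n| / (2 * ‖x‖) ≤
      Filter.limsup
        (fun z => (-(∑' n : ℕ, (J z n - J x n) * y n)) /
          (‖z - x‖ + ‖J z - J x‖)) (𝓝[≠] x) ∧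
    (0 : lp (fun _ : ℕ => ℝ) (ENNReal.ofReal q)) ∉
      {w : lp (fun _ : ℕ => ℝ) (ENNReal.ofReal q) |
        Filter.limsup
          (fun z => ((∑' n : ℕ, w n * (z n - x n)) - ∑' n : ℕ, (J z n - J x n) * y n) /
            (‖z - x‖ + ‖J z - J x‖)) (𝓝[≠] x) ≤ 0} :=
  zero_not_mem_coderivative_duality_map_lp_general p q hp hpq J hJ x y hxy
end

section
/- Let x ∈ l_p (1 < p < ∞), x ≠ 0, and a > 0 with a ≠ 1. Then a·J(x) ∉ D̂*J(x)(x); indeed limsup_{z→x} (⟨aJ(x), z−x⟩ − ⟨J(z)−J(x), x⟩)/(‖z−x‖_p + ‖J(z)−J(x)‖_q) ≥ |a−1|·‖x‖_p/2 > 0. -/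
/-!
`J` is homogeneous, so along the ray `z = x + t (a - 1) x`, `t ↓ 0`, the quotient is constant:
its numerator is `t (a - 1)² ⟨J x, x⟩ = t (a - 1)² ‖x‖²` and its denominator is
`t |a - 1| (‖x‖ + ‖J x‖) = 2 t |a - 1| ‖x‖`. By Hölder the quotient is bounded above,
so `limsup` is not the junk value it takes on unbounded functions, and it dominates the value
`|a - 1| ‖x‖ / 2` taken along the ray.
-/

open scoped ENNReal Topology
open Filter

lemma lp.abs_tsum_mul_le {ι : Type*} {P Q : ℝ≥0∞} [Fact (1 ≤ P)] [Fact (1 ≤ Q)]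
    (hPQ : Q.toReal.HolderConjugate P.toReal)
    (f : lp (fun _ : ι => ℝ) Q) (g : lp (fun _ : ι => ℝ) P) :
    |∑' i, f i * g i| ≤ ‖f‖ * ‖g‖ := by
  obtain ⟨hs, hle⟩ := lp.tsum_mul_le_mul_norm hPQ f g
  calc |∑' i, f i * g i| = ‖∑' i, f i * g i‖ := (Real.norm_eq_abs _).symm
    _ ≤ ∑' i, ‖f i * g i‖ := norm_tsum_le_tsum_norm (by simpa only [norm_mul] using hs)
    _ ≤ ‖f‖ * ‖g‖ := by simpa only [norm_mul] using hle

lemma lp.norm_rpow_eq_tsum_abs_rpow {ι : Type*} {p : ℝ} [Fact (1 ≤ ENNReal.ofReal p)]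
    (x : lp (fun _ : ι => ℝ) (ENNReal.ofReal p)) :
    ‖x‖ ^ p = ∑' i, |x i| ^ p := by
  have hp : 0 < p := zero_lt_one.trans_le (ENNReal.one_le_ofReal.1 Fact.out)
  simpa only [ENNReal.toReal_ofReal hp.le, Real.norm_eq_abs] using
    lp.norm_rpow_eq_tsum (by rwa [ENNReal.toReal_ofReal hp.le]) x

lemma abs_rpow_sub_two_mul_self_mul_self {p : ℝ} (hp : 0 < p) (z : ℝ) :
    |z| ^ (p - 2) * z * z = |z| ^ p := by
  rcases eq_or_ne z 0 with rfl | hz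
  · simp [Real.zero_rpow hp.ne']
  · rw [mul_assoc, ← abs_mul_abs_self, ← sq, ← Real.rpow_two,
      ← Real.rpow_add (abs_pos.2 hz), sub_add_cancel]

lemma abs_abs_rpow_sub_two_mul_self_rpow {p q : ℝ} (hpq : p.HolderConjugate q) (z : ℝ) :
    |(|z| ^ (p - 2) * z)| ^ q = |z| ^ p := by
  have habs : |(|z| ^ (p - 2) * z)| = |z| ^ (p - 1) := by
    rcases eq_or_ne z 0 with rfl | hz
    · simp [Real.zero_rpow (sub_pos.2 hpq.lt).ne']
    · rw [abs_mul, abs_of_nonneg (by positivity), ← Real.rpow_add_one (abs_ne_zero.2 hz)]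
      ring_nf
  rw [habs, ← Real.rpow_mul (abs_nonneg z), hpq.sub_one_mul_conj]

def IsLpDualityMap {ι : Type*} (p : ℝ) [Fact (1 ≤ ENNReal.ofReal p)] {R : ℝ≥0∞} [Fact (1 ≤ R)]
    (J : lp (fun _ : ι => ℝ) (ENNReal.ofReal p) → lp (fun _ : ι => ℝ) R) : Prop :=
  ∀ z i, J z i = |z i| ^ (p - 2) * z i / ‖z‖ ^ (p - 2)

namespace IsLpDualityMap

variable {ι : Type*} {p : ℝ} [Fact (1 ≤ ENNReal.ofReal p)]

lemma map_smul {R : ℝ≥0∞} [Fact (1 ≤ R)]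
    {J : lp (fun _ : ι => ℝ) (ENNReal.ofReal p) → lp (fun _ : ι => ℝ) R}
    (hJ : IsLpDualityMap p J) (c : ℝ) (x : lp (fun _ : ι => ℝ) (ENNReal.ofReal p)) :
    J (c • x) = c • J x := by
  ext i
  rcases eq_or_ne c 0 with rfl | hc
  · rw [hJ]
    simp
  have hc' : |c| ^ (p - 2) ≠ 0 := (Real.rpow_pos_of_pos (abs_pos.2 hc) _).ne'
  rw [lp.coeFn_smul, Pi.smul_apply, smul_eq_mul, hJ, hJ, lp.coeFn_smul, Pi.smul_apply,
    smul_eq_mul, norm_smul, Real.norm_eq_abs, abs_mul,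
    Real.mul_rpow (abs_nonneg c) (abs_nonneg _), Real.mul_rpow (abs_nonneg c) (norm_nonneg _)]
  rw [show |c| ^ (p - 2) * |x i| ^ (p - 2) * (c * x i) =
      |c| ^ (p - 2) * (c * (|x i| ^ (p - 2) * x i)) by ring,
    mul_div_mul_left _ _ hc', mul_div_assoc]

lemma tsum_mul_self {R : ℝ≥0∞} [Fact (1 ≤ R)]
    {J : lp (fun _ : ι => ℝ) (ENNReal.ofReal p) → lp (fun _ : ι => ℝ) R}
    (hJ : IsLpDualityMap p J) (x : lp (fun _ : ι => ℝ) (ENNReal.ofReal p)) :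
    ∑' i, J x i * x i = ‖x‖ ^ 2 := by
  rcases eq_or_ne x 0 with rfl | hx
  · simp
  have hp : 0 < p := zero_lt_one.trans_le (ENNReal.one_le_ofReal.1 Fact.out)
  have hxn : 0 < ‖x‖ := norm_pos_iff.2 hx
  calc ∑' i, J x i * x i = (∑' i, |x i| ^ p) / ‖x‖ ^ (p - 2) := by
        rw [← tsum_div_const]
        exact tsum_congr fun i => by
          rw [hJ, div_mul_eq_mul_div, abs_rpow_sub_two_mul_self_mul_self hp]
    _ = ‖x‖ ^ 2 := by
        rw [← lp.norm_rpow_eq_tsum_abs_rpow, ← Real.rpow_sub hxn, sub_sub_cancel, Real.rpow_two]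

lemma norm_map {q : ℝ} [Fact (1 ≤ ENNReal.ofReal q)] (hpq : p.HolderConjugate q)
    {J : lp (fun _ : ι => ℝ) (ENNReal.ofReal p) → lp (fun _ : ι => ℝ) (ENNReal.ofReal q)}
    (hJ : IsLpDualityMap p J) (x : lp (fun _ : ι => ℝ) (ENNReal.ofReal p)) :
    ‖J x‖ = ‖x‖ := by
  rcases eq_or_ne x 0 with rfl | hx
  · simpa using hJ.map_smul 0 0
  have hxn : 0 < ‖x‖ := norm_pos_iff.2 hx
  have hexp : p - (p - 2) * q = q := by linarith [hpq.sub_one_mul_conj]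
  refine Real.rpow_left_injOn hpq.symm.pos.ne' (norm_nonneg _) (norm_nonneg _) ?_
  calc ‖J x‖ ^ q = ∑' i, |J x i| ^ q := lp.norm_rpow_eq_tsum_abs_rpow _
    _ = (∑' i, |x i| ^ p) / ‖x‖ ^ ((p - 2) * q) := by
        rw [← tsum_div_const]
        refine tsum_congr fun i => ?_
        rw [hJ, abs_div, abs_of_pos (Real.rpow_pos_of_pos hxn _),
          Real.div_rpow (abs_nonneg _) (Real.rpow_nonneg hxn.le _),
          abs_abs_rpow_sub_two_mul_self_rpow hpq, ← Real.rpow_mul hxn.le]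
    _ = ‖x‖ ^ q := by
        rw [← lp.norm_rpow_eq_tsum_abs_rpow, ← Real.rpow_sub hxn, hexp]

end IsLpDualityMap

-- `w ∈ D̂*J(x)(y)` iff the limsup of this quotient as `z → x`, `z ≠ x`, is at most `0`.
noncomputable def mordukhovichQuotient {ι : Type*} {P Q : ℝ≥0∞} [Fact (1 ≤ P)] [Fact (1 ≤ Q)]
    (J : lp (fun _ : ι => ℝ) P → lp (fun _ : ι => ℝ) Q) (x y : lp (fun _ : ι => ℝ) P)
    (w : lp (fun _ : ι => ℝ) Q) (z : lp (fun _ : ι => ℝ) P) : ℝ :=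
  ((∑' i, w i * (z i - x i)) - ∑' i, (J z i - J x i) * y i) / (‖z - x‖ + ‖J z - J x‖)

lemma mordukhovichQuotient_le {ι : Type*} {P Q : ℝ≥0∞} [Fact (1 ≤ P)] [Fact (1 ≤ Q)]
    (hPQ : Q.toReal.HolderConjugate P.toReal)
    (J : lp (fun _ : ι => ℝ) P → lp (fun _ : ι => ℝ) Q) (x y : lp (fun _ : ι => ℝ) P)
    (w : lp (fun _ : ι => ℝ) Q) (z : lp (fun _ : ι => ℝ) P) :
    mordukhovichQuotient J x y w z ≤ max ‖w‖ ‖y‖ := by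
  have hw : |∑' i, w i * (z i - x i)| ≤ ‖w‖ * ‖z - x‖ := lp.abs_tsum_mul_le hPQ w (z - x)
  have hy : |∑' i, (J z i - J x i) * y i| ≤ ‖J z - J x‖ * ‖y‖ :=
    lp.abs_tsum_mul_le hPQ (J z - J x) y
  refine div_le_of_le_mul₀ (by positivity) (by positivity) ?_
  nlinarith [abs_le.1 hw, abs_le.1 hy, le_max_left ‖w‖ ‖y‖, le_max_right ‖w‖ ‖y‖,
    norm_nonneg (z - x), norm_nonneg (J z - J x)]

lemma tendsto_add_smul_nhdsNE {E : Type*} [NormedAddCommGroup E] [NormedSpace ℝ E]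
    (x : E) {v : E} (hv : v ≠ 0) :
    Tendsto (fun t : ℝ => x + t • v) (𝓝[≠] 0) (𝓝[≠] x) := by
  refine tendsto_nhdsWithin_iff.2 ⟨?_, eventually_nhdsWithin_of_forall fun t ht => ?_⟩
  · exact ((continuous_const.add (continuous_id.smul continuous_const)).tendsto' 0 x
      (by simp)).mono_left nhdsWithin_le_nhds
  · simpa [hv] using ht

lemma mordukhovichQuotient_add_smul_self {ι : Type*} {p q : ℝ} [Fact (1 ≤ ENNReal.ofReal p)]
    [Fact (1 ≤ ENNReal.ofReal q)] (hpq : p.HolderConjugate q)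
    {J : lp (fun _ : ι => ℝ) (ENNReal.ofReal p) → lp (fun _ : ι => ℝ) (ENNReal.ofReal q)}
    (hJ : IsLpDualityMap p J) {x : lp (fun _ : ι => ℝ) (ENNReal.ofReal p)} (hx : x ≠ 0)
    (a s : ℝ) :
    mordukhovichQuotient J x x (a • J x) (x + s • x) = (a - 1) * s * ‖x‖ / (2 * |s|) := by
  have hJs : J (x + s • x) - J x = s • J x := by
    rw [show x + s • x = (1 + s) • x by rw [add_smul, one_smul], hJ.map_smul, add_smul, one_smul,
      add_sub_cancel_left]
  have hpair : ∑' i, (a • J x) i * ((x + s • x) i - x i) = a * s * ‖x‖ ^ 2 := by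
    rw [← hJ.tsum_mul_self, ← tsum_mul_left]
    exact tsum_congr fun i => by
      show a * J x i * (x i + s * x i - x i) = _
      ring
  have hpairJ : ∑' i, (J (x + s • x) i - J x i) * x i = s * ‖x‖ ^ 2 := by
    rw [← hJ.tsum_mul_self, ← tsum_mul_left]
    exact tsum_congr fun i => by
      show (J (x + s • x) - J x) i * x i = _
      rw [hJs]
      show s * J x i * x i = _
      ring
  rw [mordukhovichQuotient, hpair, hpairJ, add_sub_cancel_left, hJs, norm_smul, norm_smul,
    hJ.norm_map hpq, Real.norm_eq_abs,
    show a * s * ‖x‖ ^ 2 - s * ‖x‖ ^ 2 = (a - 1) * s * ‖x‖ * ‖x‖ by ring,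
    show |s| * ‖x‖ + |s| * ‖x‖ = 2 * |s| * ‖x‖ by ring,
    mul_div_mul_right _ _ (norm_ne_zero_iff.2 hx)]

lemma le_limsup_mordukhovichQuotient_smul {ι : Type*} {p q : ℝ} [Fact (1 ≤ ENNReal.ofReal p)]
    [Fact (1 ≤ ENNReal.ofReal q)] (hpq : p.HolderConjugate q)
    {J : lp (fun _ : ι => ℝ) (ENNReal.ofReal p) → lp (fun _ : ι => ℝ) (ENNReal.ofReal q)}
    (hJ : IsLpDualityMap p J) {x : lp (fun _ : ι => ℝ) (ENNReal.ofReal p)} (hx : x ≠ 0)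
    {a : ℝ} (ha : a ≠ 1) :
    |a - 1| * ‖x‖ / 2 ≤ limsup (mordukhovichQuotient J x x (a • J x)) (𝓝[≠] x) := by
  have hPQ : (ENNReal.ofReal q).toReal.HolderConjugate (ENNReal.ofReal p).toReal := by
    rw [ENNReal.toReal_ofReal hpq.nonneg, ENNReal.toReal_ofReal hpq.symm.nonneg]
    exact hpq.symm
  have hray := (tendsto_add_smul_nhdsNE x (smul_ne_zero (sub_ne_zero.2 ha) hx)).mono_left
    (nhdsGT_le_nhdsNE 0)
  have hval : ∀ᶠ t in 𝓝[>] (0 : ℝ),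
      |a - 1| * ‖x‖ / 2 ≤ mordukhovichQuotient J x x (a • J x) (x + t • (a - 1) • x) := by
    filter_upwards [self_mem_nhdsWithin] with t (ht : 0 < t)
    rw [smul_smul, mordukhovichQuotient_add_smul_self hpq hJ hx, abs_mul, abs_of_pos ht]
    apply le_of_eq
    field_simp
    exact sq_abs _
  exact le_limsup_of_frequently_le (hray.frequently hval.frequently)
    (isBoundedUnder_of ⟨_, mordukhovichQuotient_le hPQ J x x (a • J x)⟩)

theorem smul_duality_not_mem_coderivative_lp_general (p q : ℝ) (hp : 1 < p)
    (hpq : 1 / p + 1 / q = 1)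
    [Fact (1 ≤ ENNReal.ofReal p)] [Fact (1 ≤ ENNReal.ofReal q)]
    (J : lp (fun _ : ℕ => ℝ) (ENNReal.ofReal p) → lp (fun _ : ℕ => ℝ) (ENNReal.ofReal q))
    (hJ : ∀ z, ∀ n : ℕ, J z n = |z n| ^ (p - 2) * z n / ‖z‖ ^ (p - 2))
    (x : lp (fun _ : ℕ => ℝ) (ENNReal.ofReal p)) (hx : x ≠ 0)
    (a : ℝ) (ha1 : a ≠ 1) :
    (|a - 1| * ‖x‖ / 2 ≤
      Filter.limsup
        (fun z => ((∑' n : ℕ, (a * J x n) * (z n - x n)) -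
            ∑' n : ℕ, (J z n - J x n) * x n) /
          (‖z - x‖ + ‖J z - J x‖)) (𝓝[≠] x)) ∧
    a • J x ∉
      {w : lp (fun _ : ℕ => ℝ) (ENNReal.ofReal q) |
        Filter.limsup
          (fun z => ((∑' n : ℕ, w n * (z n - x n)) - ∑' n : ℕ, (J z n - J x n) * x n) /
            (‖z - x‖ + ‖J z - J x‖)) (𝓝[≠] x) ≤ 0} := by
  have hpq' : p.HolderConjugate q :=
    Real.holderConjugate_iff.2 ⟨hp, by simpa only [one_div] using hpq⟩
  have hlim := le_limsup_mordukhovichQuotient_smul hpq' hJ hx ha1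
  have hpos : 0 < |a - 1| * ‖x‖ / 2 :=
    div_pos (mul_pos (abs_pos.2 (sub_ne_zero.2 ha1)) (norm_pos_iff.2 hx)) two_pos
  exact ⟨hlim, fun hmem => hpos.not_ge (hlim.trans hmem)⟩

/-- for nonzero `x ∈ ℓᵖ` (`1 < p < ∞`) and `a > 0`, `a ≠ 1`,
`a·J(x) ∉ D̂*J(x)(x)`: indeed the limsup as `z → x` of
`(⟨aJ(x), z-x⟩ - ⟨J z - J x, x⟩)/(‖z-x‖ + ‖J z - J x‖)` is at least `|a-1|‖x‖/2 > 0`. -/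
theorem smul_duality_not_mem_coderivative_lp (p q : ℝ) (hp : 1 < p) (hq : 1 < q)
    (hpq : 1 / p + 1 / q = 1)
    [Fact (1 ≤ ENNReal.ofReal p)] [Fact (1 ≤ ENNReal.ofReal q)]
    (J : lp (fun _ : ℕ => ℝ) (ENNReal.ofReal p) → lp (fun _ : ℕ => ℝ) (ENNReal.ofReal q))
    (hJ : ∀ z, ∀ n : ℕ, J z n = |z n| ^ (p - 2) * z n / ‖z‖ ^ (p - 2))
    (x : lp (fun _ : ℕ => ℝ) (ENNReal.ofReal p)) (hx : x ≠ 0)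
    (a : ℝ) (ha : 0 < a) (ha1 : a ≠ 1) :
    (|a - 1| * ‖x‖ / 2 ≤
      Filter.limsup
        (fun z => ((∑' n : ℕ, (a * J x n) * (z n - x n)) -
            ∑' n : ℕ, (J z n - J x n) * x n) /
          (‖z - x‖ + ‖J z - J x‖)) (𝓝[≠] x)) ∧
    a • J x ∉
      {w : lp (fun _ : ℕ => ℝ) (ENNReal.ofReal q) |
        Filter.limsup
          (fun z => ((∑' n : ℕ, w n * (z n - x n)) - ∑' n : ℕ, (J z n - J x n) * x n) /
            (‖z - x‖ + ‖J z - J x‖)) (𝓝[≠] x) ≤ 0} :=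
  smul_duality_not_mem_coderivative_lp_general p q hp hpq J hJ x hx a ha1
end

section
/- If f ∈ L¹(S) satisfies f(s) > 0 for almost all s ∈ S, then the normalized duality mapping value J(f) is a singleton consisting of the constant function with value ‖f‖₁. -/
open MeasureTheory
open scoped ENNReal

/-! If `f > 0` a.e. and `g ≤ c` a.e., then `f (c - g)` is a.e. nonnegative, so `∫ f g = c ∫ f`
forces `f (c - g) = 0` a.e., i.e. `g = c` a.e. With `c = ‖f‖₁ = ∫ f` and `|g| ≤ ‖g‖_∞ = ‖f‖₁`
this pins down every element of `J(f)`. -/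

section

variable {S : Type*} [MeasurableSpace S] {μ : Measure S}

theorem ae_abs_le_of_eLpNorm_top_le_ofReal {g : S → ℝ} {c : ℝ} (hc : 0 ≤ c)
    (hg : eLpNorm g ⊤ μ ≤ ENNReal.ofReal c) : ∀ᵐ s ∂μ, |g s| ≤ c := by
  filter_upwards [ae_le_eLpNormEssSup (f := g) (μ := μ)] with s hs
  rw [← eLpNorm_exponent_top, Real.enorm_eq_ofReal_abs] at hs
  exact (ENNReal.ofReal_le_ofReal_iff hc).mp (hs.trans hg)

theorem ae_eq_const_of_integral_mul_eq_mul_integral {f g : S → ℝ} {c : ℝ}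
    (hfi : Integrable f μ) (hf : ∀ᵐ s ∂μ, 0 < f s)
    (hfg : Integrable (fun s => f s * g s) μ) (hg : ∀ᵐ s ∂μ, g s ≤ c)
    (h : ∫ s, f s * g s ∂μ = c * ∫ s, f s ∂μ) : g =ᵐ[μ] fun _ => c := by
  have hgap_nonneg : 0 ≤ᵐ[μ] fun s => f s * (c - g s) := by
    filter_upwards [hf, hg] with s hfs hgs
    exact mul_nonneg hfs.le (sub_nonneg.mpr hgs)
  have hgap_int : Integrable (fun s => f s * (c - g s)) μ := by
    simpa only [mul_sub, Pi.sub_def] using (hfi.mul_const c).sub hfg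
  have hgap_zero : ∫ s, f s * (c - g s) ∂μ = 0 := by
    simp only [mul_sub]
    rw [integral_sub (hfi.mul_const c) hfg, integral_mul_const, h, mul_comm, sub_self]
  filter_upwards [(integral_eq_zero_iff_of_nonneg_ae hgap_nonneg hgap_int).mp hgap_zero, hf]
    with s hs hfs
  have := (mul_eq_zero.mp hs).resolve_left hfs.ne'
  linarith

end

theorem duality_map_L1_of_ae_pos_general {S : Type*} [MeasurableSpace S] (μ : Measure S)
    (f : S → ℝ) (hfi : Integrable f μ)
    (hf : ∀ᵐ s ∂μ, 0 < f s) :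
    ((∫ s, f s * (∫ t, |f t| ∂μ) ∂μ) = (∫ t, |f t| ∂μ) ^ 2 ∧
      eLpNorm (fun _ : S => ∫ t, |f t| ∂μ) ⊤ μ = ENNReal.ofReal (∫ t, |f t| ∂μ)) ∧
    (∀ g : S → ℝ, MemLp g ⊤ μ →
      (∫ s, f s * g s ∂μ) = (∫ t, |f t| ∂μ) ^ 2 →
      eLpNorm g ⊤ μ = ENNReal.ofReal (∫ t, |f t| ∂μ) →
      g =ᵐ[μ] fun _ => ∫ t, |f t| ∂μ) := by
  set N := ∫ t, |f t| ∂μ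
  have hfN : ∫ s, f s ∂μ = N := integral_congr_ae (hf.mono fun s hs => (abs_of_pos hs).symm)
  have hN : 0 ≤ N := integral_nonneg fun _ => abs_nonneg _
  refine ⟨⟨by rw [integral_mul_const, hfN, sq], ?_⟩, fun g hg hfg hgN => ?_⟩
  · rcases eq_or_ne μ 0 with rfl | hμ
    · simp [N]
    · rw [eLpNorm_exponent_top, eLpNormEssSup_const _ hμ, Real.enorm_eq_ofReal hN]
  · have hgN_le : ∀ᵐ s ∂μ, g s ≤ N :=
      (ae_abs_le_of_eLpNorm_top_le_ofReal hN hgN.le).mono fun s hs => (le_abs_self _).trans hs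
    exact ae_eq_const_of_integral_mul_eq_mul_integral hfi hf (hfi.mul_of_top_left hg) hgN_le
      (by rw [hfg, hfN, sq])

/-- if `f ∈ L¹(S)` satisfies `f > 0` a.e., then the normalized duality mapping
value `J(f)` is a singleton consisting of the constant function with value `‖f‖₁`:
the constant `‖f‖₁` belongs to `J(f)`, and any `g ∈ L^∞` with
`∫ f g = ‖g‖_∞ ‖f‖₁ = ‖f‖₁² = ‖g‖_∞²` is a.e. equal to that constant. -/
theorem duality_map_L1_of_ae_pos {S : Type*} [MeasurableSpace S] (μ : Measure S)
    (f : S → ℝ) (hfm : Measurable f) (hfi : Integrable f μ)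
    (hf : ∀ᵐ s ∂μ, 0 < f s) :
    ((∫ s, f s * (∫ t, |f t| ∂μ) ∂μ) = (∫ t, |f t| ∂μ) ^ 2 ∧
      eLpNorm (fun _ : S => ∫ t, |f t| ∂μ) ⊤ μ = ENNReal.ofReal (∫ t, |f t| ∂μ)) ∧
    (∀ g : S → ℝ, MemLp g ⊤ μ →
      (∫ s, f s * g s ∂μ) = (∫ t, |f t| ∂μ) ^ 2 →
      eLpNorm g ⊤ μ = ENNReal.ofReal (∫ t, |f t| ∂μ) →
      g =ᵐ[μ] fun _ => ∫ t, |f t| ∂μ) :=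
  duality_map_L1_of_ae_pos_general μ f hfi hf
end

section
/- Let f ∈ L¹(S) with μ{s : f(s) = 0} = 0, so J(f) is single-valued, and write f* = J(f). If k* ∈ L^∞(S) satisfies ⟨k*, f⟩ > 0, then along g_t = (1+t)f with g_t* = (1+t)f* ∈ J(g_t), the quotient (⟨k*, g_t − f⟩)/(‖g_t − f‖₁ + ‖g_t* − f*‖_∞) converges to ⟨k*, f⟩/(2‖f‖₁) > 0 as t ↓ 0; consequently k* ∉ D̂*J(f, f*)(0). -/
open MeasureTheory
open scoped ENNReal Topology

variable {S : Type*} [MeasurableSpace S]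

/-- The `L¹` norm of a function, `‖h‖₁ = ∫ |h| dμ`. -/
noncomputable def norm1 (μ : Measure S) (h : S → ℝ) : ℝ := ∫ s, |h s| ∂μ

/-- The `L^∞` norm of a function (essential supremum). -/
noncomputable def normInf (μ : Measure S) (h : S → ℝ) : ℝ := (eLpNorm h ⊤ μ).toReal

/-- The normalized duality mapping `J : L¹(S) ⇉ L^∞(S)`:
`J(h) = {g ∈ L^∞ : ⟨g, h⟩ = ‖g‖_∞‖h‖₁ = ‖h‖₁² = ‖g‖_∞²}`. -/
noncomputable def JsetL1 (μ : Measure S) (h : S → ℝ) : Set (S → ℝ) :=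
  {g | MemLp g ⊤ μ ∧ (∫ s, h s * g s ∂μ) = (norm1 μ h) ^ 2 ∧
    eLpNorm g ⊤ μ = ENNReal.ofReal (norm1 μ h)}

/-- `k ∈ D̂*J(f, f*)(γ)`: the regular (Fréchet) coderivative condition
`limsup_{(g,g*)→(f,f*), g*∈J(g)} (⟨k, g-f⟩ - ⟨γ, g*-f*⟩)/(‖g-f‖₁ + ‖g*-f*‖_∞) ≤ 0`. -/
noncomputable def memMDL1 (μ : Measure S) (f fstar : S → ℝ) (γ : (S → ℝ) → ℝ)
    (k : S → ℝ) : Prop :=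
  ∀ ε > (0 : ℝ), ∃ δ > (0 : ℝ), ∀ g gstar : S → ℝ, gstar ∈ JsetL1 μ g →
    norm1 μ (fun s => g s - f s) < δ → normInf μ (fun s => gstar s - fstar s) < δ →
    ((∫ s, k s * (g s - f s) ∂μ) - γ (fun s => gstar s - fstar s)) /
      (norm1 μ (fun s => g s - f s) + normInf μ (fun s => gstar s - fstar s)) ≤ ε

/-!
Along the ray `t ↦ ((1 + t) f, (1 + t) f*)` both increments are `t` times the base point, so
the difference quotient of the coderivative condition is independent of `t`; since `J` is
positively homogeneous and `‖f*‖_∞ = ‖f‖₁` for `f* ∈ J(f)`, its value is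
`⟨k*, f⟩ / (2‖f‖₁)`. A positive constant value along pairs arbitrarily close to `(f, f*)`
violates the `limsup ≤ 0` condition.
-/

section DualityMapping

variable {μ : Measure S}

lemma norm1_const_mul (a : ℝ) (h : S → ℝ) :
    norm1 μ (fun s => a * h s) = |a| * norm1 μ h := by
  simp only [norm1, abs_mul, integral_const_mul]

lemma normInf_const_mul (a : ℝ) (h : S → ℝ) :
    normInf μ (fun s => a * h s) = |a| * normInf μ h := by
  rw [normInf, normInf, show (fun s => a * h s) = a • h from rfl, eLpNorm_const_smul,
    ENNReal.toReal_mul, toReal_enorm, Real.norm_eq_abs]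

lemma norm1_nonneg (h : S → ℝ) : 0 ≤ norm1 μ h :=
  integral_nonneg fun _ => abs_nonneg _

lemma norm1_pos {f : S → ℝ} (hfi : Integrable f μ) (hf0 : ¬ f =ᵐ[μ] 0) :
    0 < norm1 μ f := by
  refine (norm1_nonneg f).lt_of_ne fun h => hf0 ?_
  have habs := (integral_eq_zero_iff_of_nonneg (fun s => abs_nonneg (f s)) hfi.abs).mp h.symm
  filter_upwards [habs] with s hs
  simpa using hs

lemma eLpNorm_top_of_abs_eq (hμ : μ ≠ 0) {g : S → ℝ} {c : ℝ} (hg : ∀ s, |g s| = c) :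
    eLpNorm g ⊤ μ = ENNReal.ofReal c := by
  rw [eLpNorm_exponent_top, eLpNormEssSup]
  simp_rw [Real.enorm_eq_ofReal_abs, hg]
  exact essSup_const _ hμ

lemma normInf_eq_norm1_of_mem_JsetL1 {f fstar : S → ℝ} (hJ : fstar ∈ JsetL1 μ f) :
    normInf μ fstar = norm1 μ f := by
  rw [normInf, hJ.2.2, ENNReal.toReal_ofReal (norm1_nonneg f)]

lemma const_mul_mem_JsetL1 {f fstar : S → ℝ} {a : ℝ} (ha : 0 ≤ a)
    (hJ : fstar ∈ JsetL1 μ f) :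
    (fun s => a * fstar s) ∈ JsetL1 μ (fun s => a * f s) := by
  obtain ⟨hmem, hint, hnorm⟩ := hJ
  refine ⟨hmem.const_mul a, ?_, ?_⟩
  · simp_rw [norm1_const_mul, abs_of_nonneg ha, mul_mul_mul_comm, integral_const_mul, hint]
    ring
  · rw [show (fun s => a * fstar s) = a • fstar from rfl, eLpNorm_const_smul, hnorm,
      norm1_const_mul, abs_of_nonneg ha, ENNReal.ofReal_mul ha,
      Real.enorm_eq_ofReal_abs, abs_of_nonneg ha]

lemma sign_mem_JsetL1 (hμ : μ ≠ 0) {f fstar : S → ℝ} (hfm : Measurable f)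
    (hfstar : ∀ s, fstar s = if 0 < f s then norm1 μ f else -norm1 μ f) :
    fstar ∈ JsetL1 μ f := by
  have habs (s : S) : |fstar s| = norm1 μ f := by
    rw [hfstar s]
    split_ifs <;> simp [abs_of_nonneg (norm1_nonneg f)]
  have hmeas : Measurable fstar := by
    rw [funext hfstar]
    exact Measurable.ite (measurableSet_lt measurable_const hfm) measurable_const measurable_const
  have hnorm := eLpNorm_top_of_abs_eq hμ habs
  refine ⟨⟨hmeas.aestronglyMeasurable, hnorm ▸ ENNReal.ofReal_lt_top⟩, ?_, hnorm⟩
  have hprod (s : S) : f s * fstar s = norm1 μ f * |f s| := by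
    rw [hfstar s]
    split_ifs with h
    · rw [abs_of_pos h]; ring
    · rw [abs_of_nonpos (not_lt.mp h)]; ring
  simp_rw [hprod, integral_const_mul, sq]
  rfl

lemma ray_quotient_eq (k f fstar : S → ℝ) {t : ℝ} (ht : 0 < t) :
    (∫ s, k s * ((1 + t) * f s - f s) ∂μ) /
        (norm1 μ (fun s => (1 + t) * f s - f s) +
          normInf μ (fun s => (1 + t) * fstar s - fstar s)) =
      (∫ s, k s * f s ∂μ) / (norm1 μ f + normInf μ fstar) := by
  simp_rw [show ∀ x : ℝ, (1 + t) * x - x = t * x from fun x => by ring, norm1_const_mul,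
    normInf_const_mul, abs_of_pos ht, mul_left_comm (k _) t, integral_const_mul, ← mul_add]
  exact mul_div_mul_left _ _ ht.ne'

lemma not_memMDL1_zero_of_integral_mul_pos {f fstar k : S → ℝ} (hJ : fstar ∈ JsetL1 μ f)
    (hc : 0 < norm1 μ f) (hkf : 0 < ∫ s, k s * f s ∂μ) :
    ¬ memMDL1 μ f fstar (fun _ => 0) k := by
  intro hmem
  set c := norm1 μ f
  set q := (∫ s, k s * f s ∂μ) / (2 * c)
  have hq : 0 < q := by positivity
  obtain ⟨δ, hδ, hclose⟩ := hmem (q / 2) (half_pos hq)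
  set t := δ / (2 * c)
  have ht : 0 < t := by positivity
  have htc : t * c < δ := by
    rw [div_mul_eq_mul_div, mul_div_mul_right _ _ hc.ne']
    linarith
  have hstep := hclose _ _ (const_mul_mem_JsetL1 (by linarith : 0 ≤ 1 + t) hJ)
    (by simpa only [add_sub_cancel_left, ← sub_one_mul, norm1_const_mul, abs_of_pos ht])
    (by simpa only [add_sub_cancel_left, ← sub_one_mul, normInf_const_mul, abs_of_pos ht,
      normInf_eq_norm1_of_mem_JsetL1 hJ])
  rw [sub_zero, ray_quotient_eq k f fstar ht, normInf_eq_norm1_of_mem_JsetL1 hJ,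
    ← two_mul] at hstep
  linarith

end DualityMapping

theorem kstar_not_mem_coderivative_L1_general (μ : Measure S)
    (f : S → ℝ) (hfm : Measurable f) (hfi : Integrable f μ)
    (hf0 : ¬ (f =ᵐ[μ] 0))
    (fstar : S → ℝ)
    (hfstar : ∀ s : S, fstar s = if 0 < f s then norm1 μ f else -norm1 μ f)
    (k : S → ℝ)
    (hkf : 0 < ∫ s, k s * f s ∂μ) :
    Filter.Tendsto
      (fun t : ℝ =>
        (∫ s, k s * ((1 + t) * f s - f s) ∂μ) /
          (norm1 μ (fun s => (1 + t) * f s - f s) +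
            normInf μ (fun s => (1 + t) * fstar s - fstar s)))
      (𝓝[>] 0) (𝓝 ((∫ s, k s * f s ∂μ) / (2 * norm1 μ f))) ∧
    0 < (∫ s, k s * f s ∂μ) / (2 * norm1 μ f) ∧
    ¬ memMDL1 μ f fstar (fun _ => 0) k := by
  have hc : 0 < norm1 μ f := norm1_pos hfi hf0
  have hμ : μ ≠ 0 := by
    rintro rfl
    simp [norm1] at hc
  have hJ : fstar ∈ JsetL1 μ f := sign_mem_JsetL1 hμ hfm hfstar
  refine ⟨?_, by positivity, not_memMDL1_zero_of_integral_mul_pos hJ hc hkf⟩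
  refine tendsto_const_nhds.congr' (eventually_nhdsWithin_of_forall fun t (ht : 0 < t) => ?_)
  dsimp only
  rw [ray_quotient_eq k f fstar ht, normInf_eq_norm1_of_mem_JsetL1 hJ, two_mul]

/-- let `f ∈ L¹(S)` with `μ{f = 0} = 0`, so `J(f)` is single-valued with
value `f* = ‖f‖₁ sign f`.  If `k* ∈ L^∞` has `⟨k*, f⟩ > 0`, then along `g_t = (1+t)f`,
`g_t* = (1+t)f* ∈ J(g_t)`, the quotient `⟨k*, g_t-f⟩/(‖g_t-f‖₁ + ‖g_t*-f*‖_∞)` converges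
to `⟨k*, f⟩/(2‖f‖₁) > 0` as `t ↓ 0`; consequently `k* ∉ D̂*J(f, f*)(0)`. -/
theorem kstar_not_mem_coderivative_L1 (μ : Measure S)
    (f : S → ℝ) (hfm : Measurable f) (hfi : Integrable f μ)
    (hf0 : ¬ (f =ᵐ[μ] 0)) (hfz : μ {s | f s = 0} = 0)
    (fstar : S → ℝ)
    (hfstar : ∀ s : S, fstar s = if 0 < f s then norm1 μ f else -norm1 μ f)
    (k : S → ℝ) (hk : MemLp k ⊤ μ)
    (hkf : 0 < ∫ s, k s * f s ∂μ) :
    Filter.Tendsto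
      (fun t : ℝ =>
        (∫ s, k s * ((1 + t) * f s - f s) ∂μ) /
          (norm1 μ (fun s => (1 + t) * f s - f s) +
            normInf μ (fun s => (1 + t) * fstar s - fstar s)))
      (𝓝[>] 0) (𝓝 ((∫ s, k s * f s ∂μ) / (2 * norm1 μ f))) ∧
    0 < (∫ s, k s * f s ∂μ) / (2 * norm1 μ f) ∧
    ¬ memMDL1 μ f fstar (fun _ => 0) k :=
  kstar_not_mem_coderivative_L1_general μ f hfm hfi hf0 fstar hfstar k hkf
end

section
/- For the normalized duality mapping J on L¹(S) at the origin: D̂*J(θ, θ*)(θ**) = {θ*}. Concretely, θ* ∈ D̂*J(θ, θ*)(θ**); and for any nonzero k* ∈ L^∞(S), choosing D ⊆ {k* > 0} (or {k* < 0}) with 0 < μ(D) < ∞ and taking h_t = t·χ_D with j(h_t) ∈ J(h_t) having ‖j(h_t)‖_∞ = tμ(D), one gets limsup_{t↓0} ⟨k*, h_t⟩/(‖h_t‖₁ + ‖j(h_t)‖_∞) = (∫_D k* dμ)/(2μ(D)) ≠ 0, hence k* ∉ D̂*J(θ, θ*)(θ**). -/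
/-!
A function `k ∈ L^∞` vanishing a.e. makes every difference quotient `0`. Conversely, test the
coderivative condition along `h = ±t χ_D` with dual elements `±t μ(D) χ_D ∈ J(h)`: both norms equal
`t μ(D)`, so the quotient is the constant `±(∫_D k)/(2μ(D))`, which must then be `≤ 0` for both
signs. Hence `∫_D k = 0` for every set of finite measure, and `k = 0` a.e. by σ-finiteness. When
`k > 0` on `D` the same constant is the (eventually constant) limit along `t ↓ 0`, and it is positive.
-/

open MeasureTheory
open scoped ENNReal Topology

variable {S : Type*} [MeasurableSpace S]

section

variable {μ : Measure S} {D : Set S}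

theorem MeasureTheory.MemLp.integrableOn_of_measure_lt_top {k : S → ℝ}
    (hk : MemLp k ⊤ μ) (hD : μ D < ∞) : IntegrableOn k D μ :=
  have : Fact (μ D < ∞) := ⟨hD⟩
  (hk.restrict D).integrable le_top

omit [MeasurableSpace S] in
lemma const_mul_indicator_one (c : ℝ) (s : S) :
    c * D.indicator (fun _ => (1 : ℝ)) s = D.indicator (fun _ => c) s := by
  simpa using (Set.indicator_const_mul D (fun _ => (1 : ℝ)) c s).symm

lemma norm1_const_mul_indicator (hD : MeasurableSet D) (c : ℝ) :
    norm1 μ (fun s => c * D.indicator (fun _ => (1 : ℝ)) s) = |c| * (μ D).toReal := by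
  simp only [norm1, const_mul_indicator_one, ← Real.norm_eq_abs, norm_indicator_eq_indicator_norm]
  rw [integral_indicator_const _ hD, smul_eq_mul, mul_comm, measureReal_def]

lemma normInf_const_mul_indicator (hD0 : μ D ≠ 0) (c : ℝ) :
    normInf μ (fun s => c * D.indicator (fun _ => (1 : ℝ)) s) = |c| := by
  simp only [normInf, const_mul_indicator_one]
  rw [eLpNorm_exponent_top, eLpNormEssSup_indicator_const_eq D c hD0, Real.enorm_eq_ofReal_abs,
    ENNReal.toReal_ofReal (abs_nonneg c)]

lemma integral_mul_const_mul_indicator (hD : MeasurableSet D) (k : S → ℝ) (c : ℝ) :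
    ∫ s, k s * (c * D.indicator (fun _ => (1 : ℝ)) s) ∂μ = c * ∫ s in D, k s ∂μ := by
  simp only [const_mul_indicator_one, ← Set.indicator_mul_right (f := k)]
  rw [integral_indicator hD, integral_mul_const, mul_comm]

lemma const_mul_indicator_mem_JsetL1 (hD : MeasurableSet D) (hD0 : μ D ≠ 0) (c : ℝ) :
    (fun s => (c * (μ D).toReal) * D.indicator (fun _ => (1 : ℝ)) s) ∈
      JsetL1 μ (fun s => c * D.indicator (fun _ => (1 : ℝ)) s) := by
  have hmem : MemLp (fun s => (c * (μ D).toReal) * D.indicator (fun _ => (1 : ℝ)) s) ⊤ μ := by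
    simp only [const_mul_indicator_one]
    exact (memLp_top_const _).indicator hD
  refine ⟨hmem, ?_, ?_⟩
  · rw [norm1_const_mul_indicator hD, mul_pow, sq_abs,
      integral_mul_const_mul_indicator hD (fun s => c * D.indicator (fun _ => (1 : ℝ)) s)]
    simp only [const_mul_indicator_one]
    rw [setIntegral_indicator hD, Set.inter_self, setIntegral_const, smul_eq_mul,
      measureReal_def]
    ring
  · rw [← ENNReal.ofReal_toReal hmem.eLpNorm_ne_top, ← normInf, normInf_const_mul_indicator hD0,
      norm1_const_mul_indicator hD, abs_mul, abs_of_nonneg ENNReal.toReal_nonneg]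

lemma integral_mul_const_mul_indicator_div (hD : MeasurableSet D)
    (hD0 : μ D ≠ 0) (hfin : μ D ≠ ∞) (k : S → ℝ) {c t : ℝ} (hct : |c| = t) (ht : 0 < t) :
    (∫ s, k s * (c * D.indicator (fun _ => (1 : ℝ)) s) ∂μ) /
        (norm1 μ (fun s => c * D.indicator (fun _ => (1 : ℝ)) s) + t * (μ D).toReal) =
      c / t * ((∫ s in D, k s ∂μ) / (2 * (μ D).toReal)) := by
  have hm : 0 < (μ D).toReal := ENNReal.toReal_pos hD0 hfin
  rw [integral_mul_const_mul_indicator hD, norm1_const_mul_indicator hD, hct]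
  field_simp
  ring

lemma memMDL1_of_ae_eq_zero {k : S → ℝ} (hk : k =ᵐ[μ] 0) (f fstar : S → ℝ) :
    memMDL1 μ f fstar (fun _ => 0) k := by
  intro ε hε
  refine ⟨1, one_pos, fun g gstar _ _ _ => ?_⟩
  have hzero : ∫ s, k s * (g s - f s) ∂μ = 0 :=
    integral_eq_zero_of_ae (hk.mono fun s hs => by simp [hs])
  rw [hzero, sub_zero, zero_div]
  exact hε.le

lemma setIntegral_eq_zero_of_memMDL1 {k : S → ℝ}
    (hk : memMDL1 μ (fun _ => 0) (fun _ => 0) (fun _ => 0) k) (hD : MeasurableSet D)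
    (hD0 : μ D ≠ 0) (hfin : μ D ≠ ∞) : ∫ s in D, k s ∂μ = 0 := by
  have hm : 0 < (μ D).toReal := ENNReal.toReal_pos hD0 hfin
  have hsign : ∀ σ : ℝ, |σ| = 1 → σ * ((∫ s in D, k s ∂μ) / (2 * (μ D).toReal)) ≤ 0 := by
    intro σ hσ
    refine le_of_forall_pos_le_add fun ε hε => ?_
    obtain ⟨δ, hδ, hquot⟩ := hk ε hε
    obtain ⟨t, ht, htm⟩ := exists_pos_mul_lt hδ (μ D).toReal
    have hσt : |σ * t| = t := by rw [abs_mul, hσ, one_mul, abs_of_pos ht]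
    have hnorm1 : norm1 μ (fun s => σ * t * D.indicator (fun _ => (1 : ℝ)) s) < δ := by
      rwa [norm1_const_mul_indicator hD, hσt, mul_comm]
    have hnormInf := normInf_const_mul_indicator hD0 (σ * t * (μ D).toReal)
    rw [abs_mul, hσt, abs_of_pos hm] at hnormInf
    have := hquot _ _ (const_mul_indicator_mem_JsetL1 hD hD0 (σ * t))
    simp only [sub_zero] at this
    rw [hnormInf, integral_mul_const_mul_indicator_div hD hD0 hfin k hσt ht,
      mul_div_cancel_right₀ σ ht.ne'] at this
    simpa using this hnorm1 (by rwa [mul_comm])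
  have hquot_zero : (∫ s in D, k s ∂μ) / (2 * (μ D).toReal) = 0 := by
    linarith [hsign 1 abs_one, hsign (-1) (by simp)]
  simpa [hm.ne'] using hquot_zero

lemma setIntegral_pos_of_subset_pos {k : S → ℝ} (hD : MeasurableSet D) (hkD : IntegrableOn k D μ) (hDk : D ⊆ {s | 0 < k s}) (hD0 : 0 < μ D) :
    0 < ∫ s in D, k s ∂μ := by
  rw [setIntegral_pos_iff_support_of_nonneg_ae
    ((ae_restrict_mem hD).mono fun s hs => (hDk hs).le) hkD,
    Set.inter_eq_self_of_subset_right fun s hs => Function.mem_support.mpr (hDk hs).ne']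
  exact hD0

end

theorem coderivative_L1_at_origin_general (μ : Measure S) [SigmaFinite μ]
    (k : S → ℝ) (hk : MemLp k ⊤ μ) :
    (memMDL1 μ (fun _ => 0) (fun _ => 0) (fun _ => 0) k ↔ k =ᵐ[μ] 0) ∧
    (∀ D : Set S, MeasurableSet D → D ⊆ {s | 0 < k s} → 0 < μ D → μ D < ⊤ →
      (Filter.Tendsto
        (fun t : ℝ =>
          (∫ s, k s * (t * D.indicator (fun _ => (1 : ℝ)) s) ∂μ) /
            (norm1 μ (fun s => t * D.indicator (fun _ => (1 : ℝ)) s) + t * (μ D).toReal))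
        (𝓝[>] 0) (𝓝 ((∫ s in D, k s ∂μ) / (2 * (μ D).toReal))) ∧
        (∫ s in D, k s ∂μ) / (2 * (μ D).toReal) ≠ 0)) := by
  refine ⟨⟨fun hmem => ?_, fun hk0 => memMDL1_of_ae_eq_zero hk0 _ _⟩, ?_⟩
  · refine ae_eq_zero_of_forall_setIntegral_eq_of_sigmaFinite
      (fun D _ hfin => hk.integrableOn_of_measure_lt_top hfin) fun D hD hfin => ?_
    by_cases hD0 : μ D = 0
    · rw [Measure.restrict_eq_zero.mpr hD0, integral_zero_measure]
    · exact setIntegral_eq_zero_of_memMDL1 hmem hD hD0 hfin.ne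
  intro D hD hDk hD0 hfin
  refine ⟨tendsto_const_nhds.congr' ?_, ?_⟩
  · filter_upwards [self_mem_nhdsWithin] with t (ht : 0 < t)
    rw [integral_mul_const_mul_indicator_div hD hD0.ne' hfin.ne k (abs_of_pos ht) ht,
      div_self ht.ne', one_mul]
  · exact (div_pos (setIntegral_pos_of_subset_pos hD (hk.integrableOn_of_measure_lt_top hfin)
      hDk hD0) (mul_pos two_pos (ENNReal.toReal_pos hD0.ne' hfin.ne))).ne'

/-- for the normalized duality mapping `J` on `L¹(S)` at the origin,
`D̂*J(θ, θ*)(θ**) = {θ*}`: a function `k* ∈ L^∞` belongs to the coderivative set iff it is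
(a.e.) zero.  Moreover, for `D ⊆ {k* > 0}` with `0 < μ D < ∞`, along `h_t = t·χ_D` with
`j(h_t) ∈ J(h_t)` of norm `‖j(h_t)‖_∞ = tμ(D)` the quotient
`⟨k*, h_t⟩/(‖h_t‖₁ + ‖j(h_t)‖_∞)` tends to `(∫_D k*)/(2μ(D))`, which is nonzero. -/
theorem coderivative_L1_at_origin (μ : Measure S) [SigmaFinite μ]
    (k : S → ℝ) (hkm : Measurable k) (hk : MemLp k ⊤ μ) :
    (memMDL1 μ (fun _ => 0) (fun _ => 0) (fun _ => 0) k ↔ k =ᵐ[μ] 0) ∧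
    (∀ D : Set S, MeasurableSet D → D ⊆ {s | 0 < k s} → 0 < μ D → μ D < ⊤ →
      (Filter.Tendsto
        (fun t : ℝ =>
          (∫ s, k s * (t * D.indicator (fun _ => (1 : ℝ)) s) ∂μ) /
            (norm1 μ (fun s => t * D.indicator (fun _ => (1 : ℝ)) s) + t * (μ D).toReal))
        (𝓝[>] 0) (𝓝 ((∫ s in D, k s ∂μ) / (2 * (μ D).toReal))) ∧
        (∫ s in D, k s ∂μ) / (2 * (μ D).toReal) ≠ 0)) :=
  coderivative_L1_at_origin_general μ k hk
end
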